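/- Let W_n(q) = ∑_{(σ,τ)} q^{inv(σ)+inv(τ)}, where the sum runs over all pairs (σ,τ) of permutations of {1,...,n} with no common ascent. Then for all n ≥ 1, ∑_{i=0}^{n} (-1)^i [n choose i]_q^2 W_i(q) = 0, where [n choose i]_q is the Gaussian binomial coefficient. -/

import Mathlib

open Finset

/-- A common ascent of a pair of permutations of `{1,...,n}`:
an index `i` with `i+1 = j ≤ n` such that both permutations increase from `i` to `j`. -/
def CommonAscent {n : ℕ} (σ τ : Equiv.Perm (Fin n)) : Prop :=
  ∃ i j : Fin n, (i : ℕ) + 1 = (j : ℕ) ∧ σ i < σ j ∧ τ i < τ j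

instance {n : ℕ} : DecidablePred
    (fun p : Equiv.Perm (Fin n) × Equiv.Perm (Fin n) => CommonAscent p.1 p.2) := fun _ => by
  unfold CommonAscent; infer_instance

/-- The number of inversions of a permutation. -/
def inversions {n : ℕ} (σ : Equiv.Perm (Fin n)) : ℕ :=
  (Finset.univ.filter (fun p : Fin n × Fin n => p.1 < p.2 ∧ σ p.2 < σ p.1)).card

/-- `W n = ∑ q^(inv σ + inv τ)` over pairs of permutations with no common ascent,
as a polynomial in `q`. -/
noncomputable def W (n : ℕ) : Polynomial ℚ :=
  ∑ p ∈ Finset.univ.filter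
      (fun p : Equiv.Perm (Fin n) × Equiv.Perm (Fin n) => ¬ CommonAscent p.1 p.2),
    Polynomial.X ^ (inversions p.1 + inversions p.2)

/-- The `q`-analogue `[i]_q = 1 + q + ... + q^{i-1}` as a polynomial. -/
noncomputable def qInt (i : ℕ) : Polynomial ℚ := ∑ j ∈ Finset.range i, Polynomial.X ^ j

/-- The `q`-factorial `[n]_q! = ∏_{i=1}^n [i]_q`. -/
noncomputable def qFact (n : ℕ) : Polynomial ℚ := ∏ i ∈ Finset.range n, qInt (i + 1)

/-- The Gaussian binomial coefficient `[n choose i]_q = [n]_q!/([i]_q![n-i]_q!)`,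
as a rational function in `q`. -/
noncomputable def qBinom (n i : ℕ) : RatFunc ℚ :=
  algebraMap (Polynomial ℚ) (RatFunc ℚ) (qFact n) /
    (algebraMap (Polynomial ℚ) (RatFunc ℚ) (qFact i) *
      algebraMap (Polynomial ℚ) (RatFunc ℚ) (qFact (n - i)))

/-!
Writing a permutation of `Fin n` as `s * ρ`, where `ρ` only permutes the first `i` positions and
`s` is increasing on them, adds inversions: `inv (s * ρ) = inv s + inv ρ`. Splitting off the last
`n - i` positions and then the first `i` ones gives `[n]_q! = G(n,i) [i]_q! [n-i]_q!`, where
`G(n,i)` sums `q^inv` over the (Grassmannian) permutations increasing on both blocks; hence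
`[n choose i]_q = G(n,i)`. The same factorization, applied to both members of a pair, shows that
`G(n,i)^2 W_i` sums `q^(inv σ + inv τ)` over the pairs `(σ, τ)` of permutations of `Fin n`
having a common ascent at every position `j ≥ i` and at no position `j < i - 1`. Sorting these
pairs by whether `i - 1` is a common ascent writes the `i`-th term as `H_{i-1} + H_i`, where
`H_m` runs over the pairs whose common ascents are exactly the positions `j ≥ m`, so the
alternating sum telescopes to `0` (the end terms `i = 0` and `i = n` contribute only `H_0` and
`H_{n-1}`).
-/

open Equiv Polynomial

namespace Equiv.Perm

variable {α : Type*} {S : Set α} {g : Perm α}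

theorem apply_mem_iff_of_fixes_compl (hg : ∀ x ∉ S, g x = x) (x : α) : g x ∈ S ↔ x ∈ S := by
  by_cases hx : x ∈ S
  · refine iff_of_true (by_contra fun hgx => ?_) hx
    rw [g.injective (hg _ hgx)] at hgx
    exact hgx hx
  · rw [hg x hx]

theorem apply_lt_apply_of_fixes_compl [LinearOrder α] (hS : S.OrdConnected)
    (hg : ∀ x ∉ S, g x = x) {p q : α} (hpq : p < q) (hpqS : ¬(p ∈ S ∧ q ∈ S)) : g p < g q := by
  by_cases hp : p ∈ S
  · have hq : q ∉ S := fun hq => hpqS ⟨hp, hq⟩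
    have hgp : g p ∈ S := (apply_mem_iff_of_fixes_compl hg p).2 hp
    rw [hg q hq]
    by_contra! h
    exact hq (hS.out hp hgp ⟨hpq.le, h⟩)
  · rw [hg p hp]
    by_cases hq : q ∈ S
    · have hgq : g q ∈ S := (apply_mem_iff_of_fixes_compl hg q).2 hq
      by_contra! h
      exact hp (hS.out hgq hq ⟨h, hpq.le⟩)
    · rwa [hg q hq]

end Equiv.Perm

theorem StrictMonoOn.comp_of_range {α β γ : Type*} [Preorder α] [Preorder β] [Preorder γ]
    {g : β → γ} {f : α → β} (hg : StrictMonoOn g (Set.range f)) (hf : StrictMono f) :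
    StrictMono (g ∘ f) :=
  fun _ _ hab => hg ⟨_, rfl⟩ ⟨_, rfl⟩ (hf hab)

theorem Tuple.sort_comp_perm_of_strictMono {α : Type*} [LinearOrder α] {k : ℕ} {g : Fin k → α}
    (hg : StrictMono g) (ρ : Perm (Fin k)) : Tuple.sort (g ∘ ρ) = ρ⁻¹ := by
  refine (Tuple.eq_sort_iff.2 ⟨?_, fun i j hij hgij => ?_⟩).symm
  · simpa [Function.comp_def] using hg.monotone
  · simp only [Perm.coe_inv, Function.comp_apply, apply_symm_apply, hg.injective.eq_iff] at hgij
    exact absurd hgij hij.ne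

theorem Finset.sum_coe_sort_filter {α M : Type*} [AddCommMonoid M] (A : Finset α)
    (P : α → Prop) [DecidablePred P] (w : α → M) :
    ∑ a : A with P a.1, w a.1 = ∑ a ∈ A with P a, w a := by
  rw [sum_filter, sum_filter, ← sum_coe_sort A]

theorem Finset.sum_filter_eq_mul_of_equiv {α β γ R : Type*} [Fintype α] [Fintype β] [Fintype γ]
    [NonUnitalNonAssocSemiring R] (e : α ≃ β × γ) {P : α → Prop} {P₁ : β → Prop} {P₂ : γ → Prop}
    [DecidablePred P] [DecidablePred P₁] [DecidablePred P₂] {w : α → R} {w₁ : β → R} {w₂ : γ → R}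
    (hP : ∀ b c, P (e.symm (b, c)) ↔ P₁ b ∧ P₂ c) (hw : ∀ b c, w (e.symm (b, c)) = w₁ b * w₂ c) :
    ∑ a with P a, w a = (∑ b with P₁ b, w₁ b) * ∑ c with P₂ c, w₂ c := by
  simp only [sum_filter, Fintype.sum_mul_sum, ite_zero_mul_ite_zero]
  rw [← Fintype.sum_prod_type', ← e.symm.sum_comp]
  simp only [hP, hw]

theorem alternating_sum_eq_zero_of_telescoping {R : Type*} [CommRing R] {n : ℕ} (hn : 1 ≤ n)
    {G H : ℕ → R} (h0 : G 0 = H 0) (hsucc : ∀ m, m + 1 < n → G (m + 1) = H m + H (m + 1))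
    (htop : G n = H (n - 1)) : ∑ i ∈ range (n + 1), (-1) ^ i * G i = 0 := by
  have partial_sum (m : ℕ) (hm : m < n) :
      ∑ i ∈ range (m + 1), (-1) ^ i * G i = (-1) ^ m * H m := by
    induction m with
    | zero => simp [h0]
    | succ m ih =>
      rw [sum_range_succ, ih (by omega), hsucc m hm]
      ring
  obtain ⟨m, rfl⟩ : ∃ m, n = m + 1 := ⟨n - 1, by omega⟩
  rw [sum_range_succ, partial_sum m (by omega), htop, Nat.add_sub_cancel]
  ring

section Inversions

variable {k n : ℕ}

def inversionSet (σ : Perm (Fin n)) : Finset (Fin n × Fin n) :=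
  univ.filter fun p => p.1 < p.2 ∧ σ p.2 < σ p.1

@[simp]
theorem mem_inversionSet {σ : Perm (Fin n)} {p : Fin n × Fin n} :
    p ∈ inversionSet σ ↔ p.1 < p.2 ∧ σ p.2 < σ p.1 := by
  simp [inversionSet]

theorem card_inversionSet (σ : Perm (Fin n)) : #(inversionSet σ) = inversions σ :=
  rfl

open scoped Classical in
theorem card_inversionSet_mul_filter_not_both {S : Set (Fin n)} (hS : S.OrdConnected)
    {g : Perm (Fin n)} (hg : ∀ x ∉ S, g x = x) (s : Perm (Fin n)) :
    #((inversionSet (s * g)).filter fun p => ¬(p.1 ∈ S ∧ p.2 ∈ S)) =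
      #((inversionSet s).filter fun p => ¬(p.1 ∈ S ∧ p.2 ∈ S)) := by
  have maps (g : Perm (Fin n)) (hg : ∀ x ∉ S, g x = x) (s : Perm (Fin n)) :
      Set.MapsTo (fun p : Fin n × Fin n => (g p.1, g p.2))
        ((inversionSet (s * g)).filter fun p => ¬(p.1 ∈ S ∧ p.2 ∈ S))
        ((inversionSet s).filter fun p => ¬(p.1 ∈ S ∧ p.2 ∈ S)) := by
    rintro ⟨p, q⟩
    simp only [coe_filter, mem_inversionSet, Set.mem_ofPred_eq, Perm.mul_apply]
    rintro ⟨⟨hpq, hinv⟩, hpqS⟩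
    refine ⟨⟨Perm.apply_lt_apply_of_fixes_compl hS hg hpq hpqS, hinv⟩, ?_⟩
    simpa only [Perm.apply_mem_iff_of_fixes_compl hg] using hpqS
  have hg' (x : Fin n) (hx : x ∉ S) : g⁻¹ x = x := by
    rw [Perm.inv_eq_iff_eq, hg x hx]
  refine card_nbij' _ (fun p => (g⁻¹ p.1, g⁻¹ p.2)) (maps g hg s) ?_ (fun _ _ => by simp)
    (fun _ _ => by simp)
  simpa using maps g⁻¹ hg' (s * g)

noncomputable def blockPerm (f : Fin k ↪o Fin n) : Perm (Fin k) →* Perm (Fin n) :=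
  Perm.viaEmbeddingHom f.toEmbedding

variable {f : Fin k ↪o Fin n}

theorem blockPerm_apply_apply (ρ : Perm (Fin k)) (j : Fin k) : blockPerm f ρ (f j) = f (ρ j) :=
  ρ.viaEmbedding_apply _ j

theorem blockPerm_apply_of_notMem (ρ : Perm (Fin k)) {x : Fin n} (hx : x ∉ Set.range f) :
    blockPerm f ρ x = x :=
  ρ.viaEmbedding_apply_of_notMem _ x hx

theorem mul_blockPerm_comp (s : Perm (Fin n)) (ρ : Perm (Fin k)) :
    ⇑(s * blockPerm f ρ) ∘ f = (⇑s ∘ f) ∘ ρ := by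
  ext j
  simp [blockPerm_apply_apply]

theorem strictMonoOn_mul_blockPerm_iff {T : Set (Fin n)} (hT : ∀ x ∈ T, x ∉ Set.range f)
    (s : Perm (Fin n)) (ρ : Perm (Fin k)) :
    StrictMonoOn (s * blockPerm f ρ) T ↔ StrictMonoOn s T := by
  have heq : Set.EqOn (s * blockPerm f ρ) s T := fun x hx => by
    simp [blockPerm_apply_of_notMem ρ (hT x hx)]
  exact ⟨fun h => h.congr heq, fun h => h.congr heq.symm⟩

open scoped Classical in
theorem card_inversionSet_mul_blockPerm_filter_both {s : Perm (Fin n)}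
    (hs : StrictMonoOn s (Set.range f)) (ρ : Perm (Fin k)) :
    #((inversionSet (s * blockPerm f ρ)).filter fun p => p.1 ∈ Set.range f ∧ p.2 ∈ Set.range f) =
      inversions ρ := by
  have hsf := hs.comp_of_range f.strictMono
  rw [← card_inversionSet]
  symm
  refine card_bij (fun p _ => (f p.1, f p.2)) (fun p hp => ?_) (by simp +contextual) ?_
  · rw [mem_inversionSet] at hp
    simp only [mem_filter, mem_inversionSet, Perm.mul_apply, blockPerm_apply_apply,
      f.lt_iff_lt, Set.mem_range_self, and_self, and_true]
    exact ⟨hp.1, hsf hp.2⟩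
  · rintro ⟨_, _⟩ hp
    simp only [mem_filter, mem_inversionSet] at hp
    obtain ⟨⟨hpq, hinv⟩, ⟨a, rfl⟩, ⟨b, rfl⟩⟩ := hp
    simp only [Perm.mul_apply, blockPerm_apply_apply] at hinv
    exact ⟨(a, b), by simpa using ⟨f.lt_iff_lt.1 hpq, hsf.lt_iff_lt.1 hinv⟩, rfl⟩

open scoped Classical in
/-- Inversions of `s * blockPerm f ρ` inside the block are those of `ρ`; the others are moved
bijectively to those of `s` by `blockPerm f ρ`, which respects the order of every pair not
contained in the (order-connected) block. -/
theorem inversions_mul_blockPerm (hf : (Set.range f).OrdConnected) {s : Perm (Fin n)}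
    (hs : StrictMonoOn s (Set.range f)) (ρ : Perm (Fin k)) :
    inversions (s * blockPerm f ρ) = inversions s + inversions ρ := by
  have split (σ : Perm (Fin n)) := (card_filter_add_card_filter_not
    (s := inversionSet σ) fun p => p.1 ∈ Set.range f ∧ p.2 ∈ Set.range f).symm
  have no_inside :
      (inversionSet s).filter (fun p => p.1 ∈ Set.range f ∧ p.2 ∈ Set.range f) = ∅ := by
    refine filter_eq_empty_iff.2 fun p hp ⟨hp1, hp2⟩ => ?_
    rw [mem_inversionSet] at hp
    exact (hs hp1 hp2 hp.1).not_gt hp.2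
  have outside :=
    card_inversionSet_mul_filter_not_both hf (fun x hx => blockPerm_apply_of_notMem ρ hx) s
  rw [← card_inversionSet, ← card_inversionSet, split, split s, no_inside,
    card_inversionSet_mul_blockPerm_filter_both hs, card_empty, zero_add, add_comm]
  congr 1
  convert outside

end Inversions

section Factorization

variable {k n : ℕ} (f : Fin k ↪o Fin n)

open scoped Classical in
noncomputable def strictMonoOnPerms (S : Set (Fin n)) : Finset (Perm (Fin n)) :=
  univ.filter fun s : Perm (Fin n) => StrictMonoOn s S

@[simp]
theorem mem_strictMonoOnPerms {S : Set (Fin n)} {s : Perm (Fin n)} :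
    s ∈ strictMonoOnPerms S ↔ StrictMonoOn s S := by
  simp [strictMonoOnPerms]

theorem strictMonoOn_mul_blockPerm_sort (σ : Perm (Fin n)) :
    StrictMonoOn (σ * blockPerm f (Tuple.sort (σ ∘ f))) (Set.range f) := by
  have hsorted : StrictMono (⇑σ ∘ f ∘ Tuple.sort (⇑σ ∘ f)) :=
    (Tuple.monotone_sort _).strictMono_of_injective
      (σ.injective.comp f.injective |>.comp (Equiv.injective _))
  rintro _ ⟨a, rfl⟩ _ ⟨b, rfl⟩ hab
  simpa [blockPerm_apply_apply] using hsorted (f.lt_iff_lt.1 hab)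

/-- The second component of `blockEquiv f σ` is the inverse of the permutation sorting the values
of `σ` on the block. -/
noncomputable def blockEquiv : Perm (Fin n) ≃ strictMonoOnPerms (Set.range f) × Perm (Fin k) where
  toFun σ := (⟨σ * blockPerm f (Tuple.sort (σ ∘ f)),
    mem_strictMonoOnPerms.2 (strictMonoOn_mul_blockPerm_sort f σ)⟩, (Tuple.sort (σ ∘ f))⁻¹)
  invFun x := x.1 * blockPerm f x.2
  left_inv σ := by simp [mul_assoc]
  right_inv := fun ⟨⟨s, hs⟩, ρ⟩ => by
    have hsort : Tuple.sort (⇑(s * blockPerm f ρ) ∘ f) = ρ⁻¹ := by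
      rw [mul_blockPerm_comp]
      exact Tuple.sort_comp_perm_of_strictMono
        ((mem_strictMonoOnPerms.1 hs).comp_of_range f.strictMono) ρ
    dsimp only
    simp only [hsort, inv_inv, mul_assoc, ← map_mul, mul_inv_cancel, map_one, mul_one]

@[simp]
theorem blockEquiv_symm_apply (x : strictMonoOnPerms (Set.range f) × Perm (Fin k)) :
    (blockEquiv f).symm x = x.1 * blockPerm f x.2 :=
  rfl

theorem sum_filter_X_pow_inversions_eq_mul (hf : (Set.range f).OrdConnected)
    (P : Perm (Fin n) → Prop) [DecidablePred P]
    (hP : ∀ s : Perm (Fin n), StrictMonoOn s (Set.range f) → ∀ ρ, P (s * blockPerm f ρ) ↔ P s) :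
    ∑ σ with P σ, (X : ℚ[X]) ^ inversions σ =
      (∑ s ∈ strictMonoOnPerms (Set.range f) with P s, (X : ℚ[X]) ^ inversions s) *
        ∑ ρ : Perm (Fin k), (X : ℚ[X]) ^ inversions ρ := by
  have hs (s : strictMonoOnPerms (Set.range f)) := mem_strictMonoOnPerms.1 s.2
  rw [sum_filter_eq_mul_of_equiv (blockEquiv f) (P₁ := fun s => P s) (P₂ := fun _ => True)
      (w₁ := fun s => X ^ inversions s.1) (w₂ := fun ρ => X ^ inversions ρ)
      (fun s ρ => by simp [hP s (hs s)])
      (fun s ρ => by simp [inversions_mul_blockPerm hf (hs s), pow_add]),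
    sum_coe_sort_filter _ P (fun s => (X : ℚ[X]) ^ inversions s), filter_true]

theorem sum_X_pow_inversions_eq_mul (hf : (Set.range f).OrdConnected) :
    ∑ σ : Perm (Fin n), (X : ℚ[X]) ^ inversions σ =
      (∑ s ∈ strictMonoOnPerms (Set.range f), (X : ℚ[X]) ^ inversions s) *
        ∑ ρ : Perm (Fin k), (X : ℚ[X]) ^ inversions ρ := by
  simpa using sum_filter_X_pow_inversions_eq_mul f hf (fun _ => True) (by simp)

end Factorization

section QFactorial

theorem inversions_eq_apply_zero_of_strictMonoOn {m : ℕ} {s : Perm (Fin (m + 1))}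
    (hs : StrictMonoOn s (Set.range Fin.succ)) : inversions s = s 0 := by
  have fst_eq_zero : ∀ p ∈ inversionSet s, p.1 = 0 := by
    rintro ⟨p, q⟩ hpq
    rw [mem_inversionSet] at hpq
    by_contra hp
    have hq : q ≠ 0 := ((Fin.zero_le p).trans_lt hpq.1).ne'
    rw [Fin.range_succ] at hs
    exact (hs hp hq hpq.1).not_gt hpq.2
  rw [← card_inversionSet, ← Fin.card_Iio (s 0)]
  refine card_bij (fun p _ => s p.2) (fun p hp => ?_) (fun p hp p' hp' h => ?_) (fun w hw => ?_)
  · rw [mem_Iio, ← fst_eq_zero p hp]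
    exact (mem_inversionSet.1 hp).2
  · exact Prod.ext ((fst_eq_zero p hp).trans (fst_eq_zero p' hp').symm) (s.injective h)
  · rw [mem_Iio] at hw
    refine ⟨(0, s⁻¹ w), mem_inversionSet.2 ⟨Fin.pos_of_ne_zero fun h => hw.ne ?_, by simpa⟩,
      by simp⟩
    simp [← h]

theorem strictMonoOn_cycleRange_symm {m : ℕ} (v : Fin (m + 1)) :
    StrictMonoOn v.cycleRange.symm (Set.range Fin.succ) := by
  rintro _ ⟨a, rfl⟩ _ ⟨b, rfl⟩ hab
  rw [Fin.cycleRange_symm_succ, Fin.cycleRange_symm_succ]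
  exact Fin.strictMono_succAbove v (Fin.succ_lt_succ_iff.1 hab)

theorem eq_cycleRange_symm_of_strictMonoOn {m : ℕ} {s : Perm (Fin (m + 1))}
    (hs : StrictMonoOn s (Set.range Fin.succ)) : s = (s 0).cycleRange.symm := by
  have hrange : Set.range (⇑s ∘ Fin.succ) = Set.range (s 0).succAbove := by
    rw [Set.range_comp, Fin.range_succ, Fin.range_succAbove, Set.image_compl_eq s.bijective,
      Set.image_singleton]
  have hsucc :=
    ((hs.comp_of_range Fin.strictMono_succ).range_inj (Fin.strictMono_succAbove _)).1 hrange
  refine Equiv.ext fun x => ?_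
  cases x using Fin.cases with
  | zero => simp
  | succ j => simpa [Fin.cycleRange_symm_succ] using congrFun hsucc j

theorem sum_strictMonoOnPerms_range_succ (m : ℕ) :
    ∑ s ∈ strictMonoOnPerms (Set.range (Fin.succ : Fin m → Fin (m + 1))),
      (X : ℚ[X]) ^ inversions s = qInt (m + 1) := by
  rw [qInt, ← Fin.sum_univ_eq_sum_range (fun j => (X : ℚ[X]) ^ j)]
  refine sum_nbij' (fun s => s 0) (fun v => v.cycleRange.symm) (by simp)
    (fun v _ => mem_strictMonoOnPerms.2 (strictMonoOn_cycleRange_symm v)) (fun s hs => ?_)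
    (by simp) (fun s hs => ?_)
  · exact (eq_cycleRange_symm_of_strictMonoOn (mem_strictMonoOnPerms.1 hs)).symm
  · rw [inversions_eq_apply_zero_of_strictMonoOn (mem_strictMonoOnPerms.1 hs)]

theorem ordConnected_range_succ (m : ℕ) :
    (Set.range (Fin.succ : Fin m → Fin (m + 1))).OrdConnected := by
  rw [Fin.range_succ]
  exact ⟨fun x hx _ _ z hz hz0 => hx (le_antisymm (hz0 ▸ hz.1) (Fin.zero_le x))⟩

theorem sum_X_pow_inversions_eq_qFact (n : ℕ) :
    ∑ σ : Perm (Fin n), (X : ℚ[X]) ^ inversions σ = qFact n := by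
  induction n with
  | zero => simp [qFact, inversions]
  | succ m ih =>
    rw [sum_X_pow_inversions_eq_mul (Fin.succOrderEmb m) (ordConnected_range_succ m),
      Fin.coe_succOrderEmb, sum_strictMonoOnPerms_range_succ, ih, qFact, qFact,
      prod_range_succ, mul_comm]

theorem qFact_monic (n : ℕ) : (qFact n).Monic :=
  monic_prod_of_monic _ _ fun j _ => monic_geom_sum_X j.succ_ne_zero

end QFactorial

section QBinomial

variable {n i : ℕ}

theorem ordConnected_setOf_val_lt : {x : Fin n | (x : ℕ) < i}.OrdConnected :=
  ⟨fun _ _ _ hy _ hz => lt_of_le_of_lt (Fin.le_def.1 hz.2) hy⟩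

theorem ordConnected_setOf_le_val : {x : Fin n | i ≤ (x : ℕ)}.OrdConnected :=
  ⟨fun _ hx _ _ _ hz => le_trans hx (Fin.le_def.1 hz.1)⟩

theorem range_castLEOrderEmb (h : i ≤ n) :
    Set.range (Fin.castLEOrderEmb h) = {x : Fin n | (x : ℕ) < i} :=
  Fin.range_castLE h

theorem notMem_range_castLEOrderEmb (h : i ≤ n) {x : Fin n} (hx : i ≤ x) :
    x ∉ Set.range (Fin.castLEOrderEmb h) := by
  rw [range_castLEOrderEmb]
  exact not_lt.2 hx

/-- The permutations summed over are the minimal coset representatives of `S_i × S_(n-i)`. -/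
noncomputable def grassmannianPoly (n i : ℕ) : ℚ[X] :=
  ∑ s ∈ strictMonoOnPerms {x : Fin n | (x : ℕ) < i} ∩ strictMonoOnPerms {x | i ≤ (x : ℕ)},
    X ^ inversions s

theorem qFact_add_eq_mul (i m : ℕ) :
    qFact (i + m) = grassmannianPoly (i + m) i * qFact i * qFact m := by
  let head := Fin.castLEOrderEmb (Nat.le_add_right i m)
  let tail := Fin.natAddOrderEmb (m := m) i
  have htail : Set.range tail = {x : Fin (i + m) | i ≤ (x : ℕ)} := Fin.range_natAdd i m
  have hP (s : Perm (Fin (i + m))) (_ : StrictMonoOn s (Set.range head)) (ρ : Perm (Fin i)) :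
      s * blockPerm head ρ ∈ strictMonoOnPerms (Set.range tail) ↔
        s ∈ strictMonoOnPerms (Set.range tail) := by
    simp only [mem_strictMonoOnPerms]
    exact strictMonoOn_mul_blockPerm_iff
      (fun _ hx => notMem_range_castLEOrderEmb _ (by rwa [htail] at hx)) s ρ
  have tail_sum := sum_filter_X_pow_inversions_eq_mul head
    (range_castLEOrderEmb _ ▸ ordConnected_setOf_val_lt) _ hP
  rw [filter_mem_eq_inter, univ_inter, filter_mem_eq_inter, range_castLEOrderEmb, htail,
    sum_X_pow_inversions_eq_qFact] at tail_sum
  rw [← sum_X_pow_inversions_eq_qFact,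
    sum_X_pow_inversions_eq_mul tail (htail ▸ ordConnected_setOf_le_val), htail, tail_sum,
    grassmannianPoly, sum_X_pow_inversions_eq_qFact]

theorem qBinom_eq_grassmannianPoly (h : i ≤ n) :
    qBinom n i = algebraMap ℚ[X] (RatFunc ℚ) (grassmannianPoly n i) := by
  obtain ⟨m, rfl⟩ := Nat.exists_eq_add_of_le h
  have hne (j : ℕ) : algebraMap ℚ[X] (RatFunc ℚ) (qFact j) ≠ 0 :=
    RatFunc.algebraMap_ne_zero (qFact_monic j).ne_zero
  rw [qBinom, qFact_add_eq_mul, Nat.add_sub_cancel_left, map_mul, map_mul, mul_assoc,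
    mul_div_cancel_right₀ _ (mul_ne_zero (hne i) (hne m))]

end QBinomial

section Ascents

variable {n i : ℕ}

def IsAscentAt (σ : Perm (Fin n)) (j : ℕ) : Prop :=
  ∃ h : j + 1 < n, σ ⟨j, Nat.lt_of_succ_lt h⟩ < σ ⟨j + 1, h⟩

theorem IsAscentAt.lt {σ : Perm (Fin n)} {j : ℕ} (h : IsAscentAt σ j) : j + 1 < n := h.1

theorem isAscentAt_iff {σ : Perm (Fin n)} {j : ℕ} (h : j + 1 < n) :
    IsAscentAt σ j ↔ σ ⟨j, Nat.lt_of_succ_lt h⟩ < σ ⟨j + 1, h⟩ :=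
  ⟨fun ⟨_, hasc⟩ => hasc, fun hasc => ⟨h, hasc⟩⟩

theorem commonAscent_iff {σ τ : Perm (Fin n)} :
    CommonAscent σ τ ↔ ∃ j, IsAscentAt σ j ∧ IsAscentAt τ j := by
  constructor
  · rintro ⟨⟨a, ha⟩, ⟨b, hb⟩, hab, hσ, hτ⟩
    subst hab
    exact ⟨a, ⟨hb, hσ⟩, ⟨hb, hτ⟩⟩
  · rintro ⟨j, ⟨h, hσ⟩, ⟨_, hτ⟩⟩
    exact ⟨_, _, rfl, hσ, hτ⟩

theorem strictMonoOn_setOf_le_val_iff {σ : Perm (Fin n)} :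
    StrictMonoOn σ {x | i ≤ (x : ℕ)} ↔ ∀ j, i ≤ j → j + 1 < n → IsAscentAt σ j := by
  refine ⟨fun h j hij hj => ⟨hj, h hij (show i ≤ j + 1 by omega) (Fin.mk_lt_mk.2 (lt_add_one j))⟩,
    fun h => ?_⟩
  rintro ⟨x, hxn⟩ (hx : i ≤ x) ⟨y, hyn⟩ (hy : i ≤ y) (hxy : x < y)
  induction y with
  | zero => omega
  | succ y ih =>
    have hstep := (isAscentAt_iff hyn).1 (h y (by omega) hyn)
    rcases Nat.lt_succ_iff_lt_or_eq.1 hxy with hlt | rfl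
    · exact (ih (by omega) (by omega) hlt).trans hstep
    · exact hstep

theorem isAscentAt_mul_blockPerm_castLE (h : i ≤ n) {s : Perm (Fin n)}
    (hs : StrictMonoOn s (Set.range (Fin.castLEOrderEmb h))) (ρ : Perm (Fin i)) {j : ℕ}
    (hj : j + 1 < i) :
    IsAscentAt (s * blockPerm (Fin.castLEOrderEmb h) ρ) j ↔ IsAscentAt ρ j := by
  have key (a : Fin i) : (s * blockPerm (Fin.castLEOrderEmb h) ρ) (Fin.castLEOrderEmb h a) =
      s (Fin.castLEOrderEmb h (ρ a)) :=
    congrArg s (blockPerm_apply_apply ρ a)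
  rw [isAscentAt_iff (by omega), isAscentAt_iff hj]
  exact (congrArg₂ (· < ·) (key ⟨j, _⟩) (key ⟨j + 1, hj⟩)).to_iff.trans
    (hs.comp_of_range (Fin.castLEOrderEmb h).strictMono).lt_iff_lt

def CommonAscentsExactlyFrom (m : ℕ) (σ τ : Perm (Fin n)) : Prop :=
  ∀ j, IsAscentAt σ j ∧ IsAscentAt τ j ↔ m ≤ j ∧ j + 1 < n

def CommonAscentsNearlyFrom (i : ℕ) (σ τ : Perm (Fin n)) : Prop :=
  ∀ j, (i ≤ j → j + 1 < n → IsAscentAt σ j ∧ IsAscentAt τ j) ∧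
    (IsAscentAt σ j ∧ IsAscentAt τ j → i ≤ j + 1)

theorem commonAscentsNearlyFrom_mul_blockPerm_iff (h : i ≤ n) {s t : Perm (Fin n)}
    (hs : StrictMonoOn s (Set.range (Fin.castLEOrderEmb h)))
    (ht : StrictMonoOn t (Set.range (Fin.castLEOrderEmb h))) (ρ ρ' : Perm (Fin i)) :
    CommonAscentsNearlyFrom i (s * blockPerm (Fin.castLEOrderEmb h) ρ)
        (t * blockPerm (Fin.castLEOrderEmb h) ρ') ↔
      (StrictMonoOn s {x | i ≤ (x : ℕ)} ∧ StrictMonoOn t {x | i ≤ (x : ℕ)}) ∧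
        ¬CommonAscent ρ ρ' := by
  have tail := strictMonoOn_mul_blockPerm_iff (T := {x : Fin n | i ≤ (x : ℕ)})
    (fun _ => notMem_range_castLEOrderEmb h)
  have head : (∀ j, IsAscentAt (s * blockPerm (Fin.castLEOrderEmb h) ρ) j ∧
      IsAscentAt (t * blockPerm (Fin.castLEOrderEmb h) ρ') j → i ≤ j + 1) ↔
      ¬CommonAscent ρ ρ' := by
    rw [commonAscent_iff, not_exists]
    refine forall_congr' fun j => ?_
    by_cases hj : j + 1 < i
    · rw [isAscentAt_mul_blockPerm_castLE h hs ρ hj, isAscentAt_mul_blockPerm_castLE h ht ρ' hj]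
      exact ⟨fun H hA => absurd (H hA) (by omega), fun H hA => absurd hA H⟩
    · exact iff_of_true (fun _ => by omega) fun hA => hj hA.1.lt
  simp only [CommonAscentsNearlyFrom, forall_and]
  rw [← strictMonoOn_setOf_le_val_iff, ← strictMonoOn_setOf_le_val_iff, tail, tail, head]

end Ascents

section Telescoping

open scoped Classical

variable {n i : ℕ}

noncomputable def exactlyFromPoly (n m : ℕ) : ℚ[X] :=
  ∑ p : Perm (Fin n) × Perm (Fin n) with CommonAscentsExactlyFrom m p.1 p.2,
    X ^ (inversions p.1 + inversions p.2)

noncomputable def nearlyFromPoly (n i : ℕ) : ℚ[X] :=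
  ∑ p : Perm (Fin n) × Perm (Fin n) with CommonAscentsNearlyFrom i p.1 p.2,
    X ^ (inversions p.1 + inversions p.2)

theorem nearlyFromPoly_eq (h : i ≤ n) : nearlyFromPoly n i = grassmannianPoly n i ^ 2 * W i := by
  let f := Fin.castLEOrderEmb h
  let e := ((blockEquiv f).prodCongr (blockEquiv f)).trans (Equiv.prodProdProdComm _ _ _ _)
  have hs (s : strictMonoOnPerms (Set.range f)) := mem_strictMonoOnPerms.1 s.2
  let T := strictMonoOnPerms {x : Fin n | i ≤ (x : ℕ)}
  rw [nearlyFromPoly, sum_filter_eq_mul_of_equiv e (P₁ := fun st => st.1.1 ∈ T ∧ st.2.1 ∈ T)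
      (P₂ := fun p => ¬CommonAscent p.1 p.2)
      (w₁ := fun st => X ^ (inversions st.1.1 + inversions st.2.1))
      (w₂ := fun p => X ^ (inversions p.1 + inversions p.2)) (fun st p => ?_) (fun st p => ?_)]
  · congr 1
    rw [sum_filter_eq_mul_of_equiv (Equiv.refl _) (P₁ := fun s => s.1 ∈ T) (P₂ := fun s => s.1 ∈ T)
      (w₁ := fun s => X ^ inversions s.1) (w₂ := fun s => X ^ inversions s.1) (fun _ _ => Iff.rfl)
      (fun _ _ => pow_add _ _ _), sq, grassmannianPoly, ← range_castLEOrderEmb h,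
      ← filter_mem_eq_inter, sum_coe_sort_filter _ (· ∈ T) (fun s => (X : ℚ[X]) ^ inversions s)]
  · simpa [e, T] using commonAscentsNearlyFrom_mul_blockPerm_iff h (hs st.1) (hs st.2) p.1 p.2
  · simp [e, inversions_mul_blockPerm (range_castLEOrderEmb h ▸ ordConnected_setOf_val_lt)
      (hs _), pow_add]
    ring

theorem nearlyFromPoly_zero (n : ℕ) : nearlyFromPoly n 0 = exactlyFromPoly n 0 := by
  refine sum_congr (filter_congr fun p _ => forall_congr' fun j => ?_) fun _ _ => rfl
  have := fun h : IsAscentAt p.1 j ∧ IsAscentAt p.2 j => h.1.lt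
  constructor
  · rintro ⟨h, -⟩
    exact ⟨fun hj => ⟨j.zero_le, this hj⟩, fun hj => h hj.1 hj.2⟩
  · intro h
    exact ⟨fun h0 hj => h.2 ⟨h0, hj⟩, fun _ => by omega⟩

theorem nearlyFromPoly_succ {m : ℕ} (hm : m + 1 < n) :
    nearlyFromPoly n (m + 1) = exactlyFromPoly n m + exactlyFromPoly n (m + 1) := by
  rw [nearlyFromPoly, ← sum_filter_add_sum_filter_not _
    (fun p : Perm (Fin n) × Perm (Fin n) => IsAscentAt p.1 m ∧ IsAscentAt p.2 m),
    filter_filter, filter_filter]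
  congr 1 <;> refine sum_congr (filter_congr fun p _ => ⟨fun ⟨hN, hm'⟩ j => ?_, fun hE => ?_⟩)
    fun _ _ => rfl
  · refine ⟨fun hj => ⟨?_, hj.1.lt⟩, fun ⟨hmj, hjn⟩ => ?_⟩
    · have := (hN j).2 hj
      omega
    · rcases hmj.eq_or_lt with rfl | hlt
      exacts [hm', (hN j).1 hlt hjn]
  · refine ⟨fun j => ⟨fun hj hjn => (hE j).2 ⟨by omega, hjn⟩, fun hj => ?_⟩, (hE m).2 ⟨le_rfl, hm⟩⟩
    have := ((hE j).1 hj).1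
    omega
  · refine ⟨fun hj => ⟨?_, hj.1.lt⟩, fun ⟨hmj, hjn⟩ => (hN j).1 hmj hjn⟩
    have := (hN j).2 hj
    rcases (by omega : j = m ∨ m + 1 ≤ j) with rfl | hmj
    exacts [absurd hj hm', hmj]
  · refine ⟨fun j => ⟨fun hj hjn => (hE j).2 ⟨hj, hjn⟩, fun hj => ?_⟩, fun hm' => ?_⟩
    · have := ((hE j).1 hj).1
      omega
    · have := ((hE m).1 hm').1
      omega

theorem nearlyFromPoly_self (n : ℕ) : nearlyFromPoly n n = exactlyFromPoly n (n - 1) := by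
  refine sum_congr (filter_congr fun p _ => forall_congr' fun j => ?_) fun _ _ => rfl
  have := fun h : IsAscentAt p.1 j ∧ IsAscentAt p.2 j => h.1.lt
  constructor
  · rintro ⟨-, h⟩
    exact ⟨fun hj => absurd (h hj) (by have := this hj; omega), fun hj => by omega⟩
  · intro h
    exact ⟨fun _ _ => by omega, fun hj => by have := (h.1 hj).1; omega⟩

end Telescoping

/-- `∑_{i=0}^n (-1)^i [n choose i]_q^2 W_i(q) = 0` for `n ≥ 1`. -/
theorem q_CSV_identity (n : ℕ) (hn : 1 ≤ n) :
    ∑ i ∈ Finset.range (n + 1),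
      (-1 : RatFunc ℚ) ^ i * qBinom n i ^ 2 *
        algebraMap (Polynomial ℚ) (RatFunc ℚ) (W i) = 0 := by
  have hterm : ∀ i ∈ range (n + 1),
      (-1 : RatFunc ℚ) ^ i * qBinom n i ^ 2 * algebraMap ℚ[X] (RatFunc ℚ) (W i) =
        algebraMap ℚ[X] (RatFunc ℚ) ((-1) ^ i * nearlyFromPoly n i) := by
    intro i hi
    have hin : i ≤ n := Nat.lt_succ_iff.1 (mem_range.1 hi)
    rw [qBinom_eq_grassmannianPoly hin, nearlyFromPoly_eq hin]
    simp only [map_mul, map_pow, map_neg, map_one]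
    ring
  rw [sum_congr rfl hterm, ← map_sum,
    alternating_sum_eq_zero_of_telescoping hn (nearlyFromPoly_zero n)
      (fun _ hm => nearlyFromPoly_succ hm) (nearlyFromPoly_self n), map_zero]
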